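/- arXiv:2407.03461 — 2 statements merged into one kernel-verified Lean document; each statement's English description precedes it below -/
import Mathlib

section
/- Let C_f ∈ K(n, m) be a plane branch with gcd(n, m) = 1, finite Zariski invariant λ_f, given in coordinates such that its Puiseux parametrization is (t^n, t^m + b t^{λ_f} + Σ_{i>λ_f} b_i t^i) with b ≠ 0 and λ_f + n ∉ ⟨n, m⟩, and let f ∈ ℂ{x}[y] be its Weierstrass polynomial. Then there exist p, q ∈ ℕ with 0 ≤ q < n and p·n + q·m = (n − 1)m + λ_f, a unique nonzero c ∈ ℂ, and coefficients a_{ij} ∈ ℂ such that f = y^n − x^m + c·x^p y^q + Σ_{i·n + j·m > p·n + q·m, j < n} a_{ij} x^i y^j. -/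
open scoped Classical

noncomputable section

/-- A plane branch `C_f`, encoded by a primitive Puiseux parametrization
`(t^n, Σ_{i>n} (a i) t^i)` which is transversal to `{x = 0}`. -/
structure Branch where
  /-- the multiplicity `n = mult(C_f)` -/
  n : ℕ
  npos : 0 < n
  /-- the coefficients of the Puiseux parametrization -/
  a : ℕ → ℂ
  /-- transversality of `{x = 0}`: the `y`-component has order `> n` -/
  lowZero : ∀ i ≤ n, a i = 0
  /-- the parametrization is primitive -/
  primitive : ∀ d : ℕ, d ∣ n → (∀ i, a i ≠ 0 → d ∣ i) → d = 1

namespace Branch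

/-- The `x`-component `t^n` of the parametrization. -/
def paramX (F : Branch) : PowerSeries ℂ := PowerSeries.X ^ F.n

/-- The `y`-component `Σ_{i>n} (a i) t^i` of the parametrization. -/
def paramY (F : Branch) : PowerSeries ℂ := PowerSeries.mk F.a

/-- The pair `(β_j, e_j)` of the characteristic sequence and the gcd sequence:
`β_0 = e_0 = n`, `β_{j+1} = min { i | a i ≠ 0 ∧ e_j ∤ i }`, `e_{j+1} = gcd (e_j, β_{j+1})`. -/
def charData (F : Branch) : ℕ → ℕ × ℕ
  | 0 => (F.n, F.n)
  | j + 1 =>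
      let b := sInf {i | F.a i ≠ 0 ∧ ¬ (F.charData j).2 ∣ i}
      (b, Nat.gcd (F.charData j).2 b)

/-- The characteristic sequence `β_j`; `β_0 = n`, `β_1 = m`. -/
def beta (F : Branch) (j : ℕ) : ℕ := (F.charData j).1

/-- The gcd sequence `e_j = gcd(β_0, …, β_j)`. -/
def e (F : Branch) (j : ℕ) : ℕ := (F.charData j).2

/-- The genus `g`: the first index with `e_g = 1`. -/
def genus (F : Branch) : ℕ := sInf {g | F.e g = 1}

/-- The minimal system of generators `v_0 < v_1 < ⋯ < v_g` of the value semigroup: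
`v_0 = n`, `v_1 = β_1`, `v_j = (e_{j-2}/e_{j-1}) v_{j-1} + β_j - β_{j-1}`. -/
def v (F : Branch) : ℕ → ℕ
  | 0 => F.n
  | 1 => F.beta 1
  | j + 2 => F.e j / F.e (j + 1) * F.v (j + 1) + F.beta (j + 2) - F.beta (j + 1)

/-- The coefficient at the rational exponent `q` of the Newton–Puiseux root indexed by `j`,
namely of `α_j(x) = Σ_i (a i) ε^{ij} x^{i/n}` with `ε = exp(2πI/n)`. -/
def rootCoeff (F : Branch) (j : ℕ) (q : ℚ) : ℂ :=
  if h : ∃ i : ℕ, (i : ℚ) = q * F.n then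
    F.a h.choose * Complex.exp (2 * Real.pi * Complex.I * j * h.choose / F.n)
  else 0

/-- The order `mult(α_j - δ_l)` of the difference of the `j`-th Newton–Puiseux root of `F`
and the `l`-th root of `G` (a rational number, `⊤` if the roots coincide). -/
def rootDiffOrder (F G : Branch) (j l : ℕ) : WithTop ℚ :=
  if h : ∃ k : ℕ, F.rootCoeff j ((k : ℚ) / (F.n * G.n)) ≠ G.rootCoeff l ((k : ℚ) / (F.n * G.n))
  then (((Nat.find h : ℚ) / (F.n * G.n) : ℚ) : WithTop ℚ)
  else ⊤

/-- The contact order `cont(C_F, C_G) = max_{j,l} mult(α_j - δ_l)` of two branches. -/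
def contact (F G : Branch) : WithTop ℚ :=
  haveI : Nonempty (Fin F.n × Fin G.n) := ⟨⟨0, F.npos⟩, ⟨0, G.npos⟩⟩
  Finset.sup' Finset.univ Finset.univ_nonempty fun p : Fin F.n × Fin G.n =>
    F.rootDiffOrder G p.1 p.2

/-- The intersection multiplicity `I(C_F, C_G) = dim_ℂ ℂ{x,y}/⟨f,g⟩`, computed as
`Σ_{j,l} mult(α_j - δ_l)` over all pairs of Newton–Puiseux roots. -/
def inter (F G : Branch) : WithTop ℚ :=
  ∑ p : Fin F.n × Fin G.n, F.rootDiffOrder G p.1 p.2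

/-- Pullback of a plane curve (here, with polynomial equation `h`) under the
parametrization of `F`: `h(t^n, Σ a_i t^i)`. -/
def pullbackPoly (F : Branch) (h : MvPolynomial (Fin 2) ℂ) : PowerSeries ℂ :=
  MvPolynomial.aeval ![F.paramX, F.paramY] h

/-- The value semigroup `Γ_F = { I(f,h) | f ∤ h }`, realized as the set of `t`-orders of the
nonzero pullbacks `h(t^n, Σ a_i t^i)`. -/
def gamma (F : Branch) : Set ℕ :=
  {d | ∃ h : MvPolynomial (Fin 2) ℂ, F.pullbackPoly h ≠ 0 ∧ (F.pullbackPoly h).order = (d : ℕ∞)}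

end Branch

/-- Substitution `φ(ρ(t))` of a power series `ρ` (with `ρ(0) = 0`) into a one-variable power
series `φ`. -/
def substt (ρ φ : PowerSeries ℂ) : PowerSeries ℂ :=
  PowerSeries.mk fun k =>
    ∑ i ∈ Finset.range (k + 1), PowerSeries.coeff i φ * PowerSeries.coeff k (ρ ^ i)

/-- Substitution `σ(u(t), v(t))` of two one-variable power series `u, v` (with
`u(0) = v(0) = 0`) into a two-variable power series `σ`. -/
def subst2 (u v : PowerSeries ℂ) (σ : MvPowerSeries (Fin 2) ℂ) : PowerSeries ℂ :=
  PowerSeries.mk fun k =>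
    ∑ p ∈ Finset.range (k + 1) ×ˢ Finset.range (k + 1),
      MvPowerSeries.coeff (Finsupp.single 0 p.1 + Finsupp.single 1 p.2) σ *
        PowerSeries.coeff k (u ^ p.1 * v ^ p.2)

namespace Branch

/-- Analytic equivalence of plane branches: there are a (formal) change of coordinates
`σ = (σ₁, σ₂)` of `(ℂ², 0)` (zero constant terms, invertible Jacobian at `0`) and a change of
parameter `ρ` (with `ord ρ = 1`) such that `σ ∘ φ_F ∘ ρ = φ_G`. -/
def AEquiv (F G : Branch) : Prop :=
  ∃ σ₁ σ₂ : MvPowerSeries (Fin 2) ℂ, ∃ ρ : PowerSeries ℂ,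
    MvPowerSeries.constantCoeff σ₁ = 0 ∧
    MvPowerSeries.constantCoeff σ₂ = 0 ∧
    MvPowerSeries.coeff (Finsupp.single 0 1) σ₁ *
        MvPowerSeries.coeff (Finsupp.single 1 1) σ₂ -
      MvPowerSeries.coeff (Finsupp.single 1 1) σ₁ *
        MvPowerSeries.coeff (Finsupp.single 0 1) σ₂ ≠ 0 ∧
    PowerSeries.constantCoeff ρ = 0 ∧ PowerSeries.coeff 1 ρ ≠ 0 ∧
    subst2 (substt ρ F.paramX) (substt ρ F.paramY) σ₁ = G.paramX ∧
    subst2 (substt ρ F.paramX) (substt ρ F.paramY) σ₂ = G.paramY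

/-- `F` is the branch `y^n - x^m = 0`, i.e. has Puiseux parametrization `(t^n, t^m)`. -/
def IsMonomial (F : Branch) (n m : ℕ) : Prop :=
  F.n = n ∧ ∀ i, F.a i = if i = m then 1 else 0

/-- `F` belongs to the family `B ⊆ K(n₁, m₁)` of plane branches analytically equivalent to
`y^{n₁} - x^{m₁} = 0`. -/
def InFamilyB (n₁ m₁ : ℕ) (F : Branch) : Prop :=
  ∃ M : Branch, M.IsMonomial n₁ m₁ ∧ F.AEquiv M

/-- `lam` is the (finite) Zariski invariant `λ_F` of `F`: the branch `F` is analytically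
equivalent to a branch with Puiseux parametrization
`(t^n, t^m + b t^lam + Σ_{i>lam} b_i t^i)` with `b ≠ 0` and `lam + n ∉ Γ_F`,
where `m = β_1`. -/
def HasZariskiInvariant (F : Branch) (lam : ℕ) : Prop :=
  ∃ G : Branch, F.AEquiv G ∧ G.n = F.n ∧
    (∀ i < F.beta 1, G.a i = 0) ∧ G.a (F.beta 1) = 1 ∧
    (∀ i, F.beta 1 < i → i < lam → G.a i = 0) ∧
    G.a lam ≠ 0 ∧ lam + F.n ∉ F.gamma

end Branch

/-- The pullback `Σ_j c_j(t^n) y(t)^j` of a curve `f = Σ_j c_j(x) y^j ∈ ℂ{x}[y]` under a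
parametrization `(t^n, y(t))`. -/
def pullbackWeierstrass (n : ℕ) (y : PowerSeries ℂ) (f : Polynomial (PowerSeries ℂ)) :
    PowerSeries ℂ :=
  ∑ j ∈ Finset.range (f.natDegree + 1), substt (PowerSeries.X ^ n) (f.coeff j) * y ^ j

/-- `f ∈ ℂ{x}[y]` is a Weierstrass polynomial of degree `n`. -/
def IsWeierstrass (f : Polynomial (PowerSeries ℂ)) (n : ℕ) : Prop :=
  f.Monic ∧ f.natDegree = n ∧ ∀ j < n, PowerSeries.constantCoeff (f.coeff j) = 0

end

/-!
Give `x` weight `n` and `y` weight `m`. As `gcd(n, m) = 1`, the monomials `x^i y^j` with `j < n`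
have pairwise distinct weights, so for `g ∈ ℂ{x}[y]` of degree `< n` the `t`-order of
`g(t^n, y(t))`, where `y(t) = t^m (1 + ⋯)`, is the least weight of a monomial of `g`, and the
leading coefficients agree. Apply this to `g = f - (y^n - x^m)`: its pullback is
`t^{nm} - y(t)^n = -n b t^{(n-1)m + λ} + ⋯` because `y(t) = t^m (1 + b t^{λ-m} + ⋯)`. Hence the
monomials of `g` of weight `< (n-1)m + λ` vanish, and the one of weight `(n-1)m + λ` has
coefficient `-n b ≠ 0`.
-/

open PowerSeries
open scoped Polynomial

namespace Nat.Coprime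

theorem eq_of_mul_add_mul_eq {n m i₁ j₁ i₂ j₂ : ℕ} (h : n.Coprime m) (hj₁ : j₁ < n)
    (hj₂ : j₂ < n) (hw : i₁ * n + j₁ * m = i₂ * n + j₂ * m) : i₁ = i₂ ∧ j₁ = j₂ := by
  have hmod : j₁ * m ≡ j₂ * m [MOD n] := by
    simpa [Nat.ModEq, Nat.add_mod] using congrArg (· % n) hw
  obtain rfl : j₁ = j₂ := (Nat.ModEq.cancel_right_of_coprime h hmod).eq_of_lt_of_lt hj₁ hj₂
  exact ⟨Nat.eq_of_mul_eq_mul_right (by omega : 0 < n) (by omega), rfl⟩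

theorem exists_mul_add_mul_eq {n m W : ℕ} (h : n.Coprime m) (hn : 0 < n)
    (hW : (n - 1) * m ≤ W) : ∃ p q, q < n ∧ p * n + q * m = W := by
  have : NeZero n := ⟨hn.ne'⟩
  set q := ((W : ZMod n) * (m : ZMod n)⁻¹).val
  have hqm : ((q * m : ℕ) : ZMod n) = W := by
    push_cast
    rw [ZMod.natCast_zmod_val, mul_assoc, mul_comm _ (m : ZMod n), ZMod.coe_mul_inv_eq_one m h.symm,
      mul_one]
  have hq : q < n := ZMod.val_lt _
  have hle : q * m ≤ W := (Nat.mul_le_mul_right m (by omega)).trans hW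
  obtain ⟨p, hp⟩ : n ∣ W - q * m := by
    rw [← ZMod.natCast_eq_zero_iff, Nat.cast_sub hle, hqm, sub_self]
  exact ⟨p, q, hq, by rw [mul_comm, ← hp]; omega⟩

end Nat.Coprime

section

variable {R : Type*} [CommRing R]

theorem PowerSeries.coeff_mul_of_coeff_eq_zero_of_lt {φ ψ : R⟦X⟧} {A : ℕ}
    (h : ∀ a < A, coeff a φ = 0) : coeff A (φ * ψ) = coeff A φ * constantCoeff ψ := by
  obtain ⟨φ', rfl⟩ := X_pow_dvd_iff.2 h
  simp [mul_assoc, coeff_X_pow_mul']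

theorem PowerSeries.coeff_expand_mul_X_pow_mul {n k W : ℕ} (hn : n ≠ 0) {c u : R⟦X⟧}
    (hu : constantCoeff u = 1) (hc : ∀ i, i * n + k < W → coeff i c = 0) :
    coeff W (expand n hn c * (X ^ k * u)) =
      if k ≤ W then coeff (W - k) (expand n hn c) else 0 := by
  rw [mul_left_comm, coeff_X_pow_mul']
  split_ifs with hk
  · rw [coeff_mul_of_coeff_eq_zero_of_lt, hu, mul_one]
    intro a ha
    rw [coeff_expand]
    split_ifs with hna
    · obtain ⟨i, rfl⟩ := hna
      rw [Nat.mul_div_cancel_left i (Nat.pos_of_ne_zero hn)]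
      exact hc i (by rw [mul_comm]; omega)
    · rfl
  · rfl

theorem coeff_eval₂_expand_eq_of_weight {n m W i j : ℕ} (hn : n ≠ 0) (hnm : n.Coprime m)
    {u : R⟦X⟧} (hu : constantCoeff u = 1) {g : R⟦X⟧[X]} (hg : g.natDegree < n)
    (hlow : ∀ i j, i * n + j * m < W → coeff i (g.coeff j) = 0) (hj : j < n)
    (hij : i * n + j * m = W) :
    coeff W (g.eval₂ (expand n hn).toRingHom (X ^ m * u)) = coeff i (g.coeff j) := by
  have hpow (k : ℕ) : (X ^ m * u) ^ k = X ^ (k * m) * u ^ k := by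
    rw [mul_pow, ← pow_mul, mul_comm m]
  have hu_pow (k : ℕ) : constantCoeff (u ^ k) = 1 := by simp [hu]
  rw [Polynomial.eval₂_eq_sum_range' _ hg, map_sum, Finset.sum_eq_single j]
  · rw [hpow, AlgHom.toRingHom_eq_coe, RingHom.coe_coe,
      coeff_expand_mul_X_pow_mul hn (hu_pow j) (hlow · j), if_pos (by omega),
      show W - j * m = n * i by rw [← hij, mul_comm]; omega, coeff_expand_mul]
  · intro k hk hkj
    rw [hpow, AlgHom.toRingHom_eq_coe, RingHom.coe_coe,
      coeff_expand_mul_X_pow_mul hn (hu_pow k) (hlow · k), coeff_expand]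
    split_ifs with hkW hdvd
    · obtain ⟨i', hi'⟩ := hdvd
      have hw : i' * n + k * m = i * n + j * m := by rw [hij, mul_comm, ← hi']; omega
      exact absurd (hnm.eq_of_mul_add_mul_eq (Finset.mem_range.1 hk) hj hw).2 hkj
    · rfl
    · rfl
  · exact fun h => absurd (Finset.mem_range.2 hj) h

theorem coeff_eq_zero_of_weight_lt {n m W : ℕ} (hn : n ≠ 0) (hnm : n.Coprime m) {u : R⟦X⟧}
    (hu : constantCoeff u = 1) {g : R⟦X⟧[X]} (hg : g.natDegree < n)
    (hpull : ∀ w < W, coeff w (g.eval₂ (expand n hn).toRingHom (X ^ m * u)) = 0) :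
    ∀ i j, i * n + j * m < W → coeff i (g.coeff j) = 0 := by
  induction W with
  | zero => exact fun i j h => absurd h (Nat.not_lt_zero _)
  | succ W ih =>
    have hlow := ih fun w hw => hpull w (by omega)
    intro i j hij
    rcases Nat.lt_succ_iff_lt_or_eq.1 hij with h | h
    · exact hlow i j h
    · by_cases hj : j < n
      · rw [← coeff_eval₂_expand_eq_of_weight hn hnm hu hg hlow hj h]
        exact hpull W (lt_add_one W)
      · rw [Polynomial.coeff_eq_zero_of_natDegree_lt (by omega), map_zero]

theorem PowerSeries.exists_one_add_X_pow_mul_pow_sub_one {δ : ℕ} (hδ : δ ≠ 0) (z : R⟦X⟧)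
    (n : ℕ) :
    ∃ v : R⟦X⟧, (1 + X ^ δ * z) ^ n - 1 = X ^ δ * v ∧ constantCoeff v = n * constantCoeff z := by
  obtain ⟨r, hr⟩ := sq_dvd_add_pow_sub_sub (X ^ δ * z) 1 n
  refine ⟨(n : R⟦X⟧) * z + X ^ δ * (z ^ 2 * r), ?_, by simp [hδ]⟩
  linear_combination hr

theorem PowerSeries.exists_eq_X_pow_mul_one_add_X_pow_mul {y : R⟦X⟧} {m l : ℕ} (hml : m < l)
    (hlow : ∀ i < m, coeff i y = 0) (hm : coeff m y = 1)
    (hmid : ∀ i, m < i → i < l → coeff i y = 0) :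
    ∃ z, y = X ^ m * (1 + X ^ (l - m) * z) ∧ constantCoeff z = coeff l y := by
  obtain ⟨u, rfl⟩ := X_pow_dvd_iff.2 hlow
  have hu (e : ℕ) : coeff e u = coeff (e + m) (X ^ m * u) := (coeff_X_pow_mul u m e).symm
  obtain ⟨z, hz⟩ : X ^ (l - m) ∣ u - 1 := by
    refine X_pow_dvd_iff.2 fun e he => ?_
    rw [map_sub, hu, coeff_one]
    rcases e with _ | e
    · simp [hm]
    · rw [hmid _ (by omega) (by omega), if_neg e.succ_ne_zero, sub_zero]
  refine ⟨z, by rw [← sub_add_cancel u 1, hz]; ring, ?_⟩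
  have hcoeff := congrArg (coeff (l - m)) hz
  rw [map_sub, hu, Nat.sub_add_cancel hml.le, coeff_one, if_neg (by omega), sub_zero] at hcoeff
  simp [hcoeff, coeff_X_pow_mul']

theorem exists_eval₂_expand_X_pow_sub_C_eq {y : R⟦X⟧} {n m l : ℕ} (hn : n ≠ 0) (hml : m < l)
    (hlow : ∀ i < m, coeff i y = 0) (hm : coeff m y = 1)
    (hmid : ∀ i, m < i → i < l → coeff i y = 0) :
    ∃ u v : R⟦X⟧, y = X ^ m * u ∧ constantCoeff u = 1 ∧
      (Polynomial.X ^ n - Polynomial.C (X ^ m) : R⟦X⟧[X]).eval₂ (expand n hn).toRingHom y =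
        X ^ ((n - 1) * m + l) * v ∧ constantCoeff v = n * coeff l y := by
  obtain ⟨z, rfl, hz⟩ := exists_eq_X_pow_mul_one_add_X_pow_mul hml hlow hm hmid
  obtain ⟨v, hv, hv0⟩ := exists_one_add_X_pow_mul_pow_sub_one (Nat.sub_ne_zero_of_lt hml) z n
  refine ⟨_, v, rfl, by simp [Nat.sub_ne_zero_of_lt hml], ?_, by rw [hv0, hz]⟩
  rw [Polynomial.eval₂_sub, Polynomial.eval₂_X_pow, Polynomial.eval₂_C, AlgHom.toRingHom_eq_coe,
    RingHom.coe_coe, map_pow, expand_X, mul_pow, eq_add_of_sub_eq hv]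
  have hexp : (n - 1) * m + l = m * n + (l - m) := by
    have := Nat.sub_one_mul n m
    have := Nat.le_mul_of_pos_left m (Nat.pos_of_ne_zero hn)
    rw [mul_comm m]
    omega
  rw [hexp]
  ring

theorem existsUnique_eq_add_C_mul_X_pow_add {n m p q : ℕ} (hnm : n.Coprime m)
    {f h : R⟦X⟧[X]} (hg : (f - h).natDegree < n)
    (hlow : ∀ i j, i * n + j * m < p * n + q * m → coeff i ((f - h).coeff j) = 0)
    (hq : q < n) (hc : coeff p ((f - h).coeff q) ≠ 0) :
    ∃! c : R, c ≠ 0 ∧ ∃ r : R⟦X⟧[X], r.degree < n ∧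
      (∀ i j, i * n + j * m ≤ p * n + q * m → coeff i (r.coeff j) = 0) ∧
      f = h + Polynomial.C (C c * X ^ p) * Polynomial.X ^ q + r := by
  refine ⟨_, ⟨hc, f - h - Polynomial.C (C (coeff p ((f - h).coeff q)) * X ^ p) * Polynomial.X ^ q,
    ?_, ?_, by ring⟩, ?_⟩
  · refine (Polynomial.degree_sub_le _ _).trans_lt (max_lt ?_ ?_)
    · exact Polynomial.degree_le_natDegree.trans_lt (by exact_mod_cast hg)
    · exact (Polynomial.degree_C_mul_X_pow_le _ _).trans_lt (by exact_mod_cast hq)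
  · intro i j hij
    rw [Polynomial.coeff_sub, Polynomial.coeff_C_mul_X_pow, map_sub]
    rcases hij.lt_or_eq with hlt | heq
    · rw [hlow i j hlt]
      split_ifs with hjq
      · subst hjq
        rw [coeff_C_mul_X_pow, if_neg (by rintro rfl; omega), sub_zero]
      · rw [map_zero, sub_zero]
    · by_cases hj : j < n
      · obtain ⟨rfl, rfl⟩ := hnm.eq_of_mul_add_mul_eq hj hq heq
        rw [if_pos rfl, coeff_C_mul_X_pow, if_pos rfl, sub_self]
      · rw [Polynomial.coeff_eq_zero_of_natDegree_lt (by omega), if_neg (by omega)]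
        simp
  · rintro c' ⟨-, r, -, hr, rfl⟩
    rw [add_assoc, add_sub_cancel_left, Polynomial.coeff_add, Polynomial.coeff_C_mul_X_pow,
      if_pos rfl, map_add, coeff_C_mul_X_pow, if_pos rfl, hr p q le_rfl, add_zero]

end

theorem substt_X_pow {n : ℕ} (hn : n ≠ 0) (φ : ℂ⟦X⟧) : substt (X ^ n) φ = expand n hn φ := by
  ext k
  rw [substt, coeff_mk, coeff_expand]
  split_ifs with hk
  · obtain ⟨i, rfl⟩ := hk
    rw [Nat.mul_div_cancel_left i (Nat.pos_of_ne_zero hn), Finset.sum_eq_single i]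
    · simp [← pow_mul, mul_comm]
    · intro j _ hji
      simp [← pow_mul, coeff_X_pow, Nat.mul_left_cancel_iff (Nat.pos_of_ne_zero hn), hji.symm]
    · simp [Nat.le_mul_of_pos_left i (Nat.pos_of_ne_zero hn)]
  · refine Finset.sum_eq_zero fun j _ => ?_
    rw [← pow_mul, coeff_X_pow, if_neg fun h => hk ⟨j, h⟩, mul_zero]

theorem pullbackWeierstrass_eq_eval₂ {n : ℕ} (hn : n ≠ 0) (y : ℂ⟦X⟧) (f : ℂ⟦X⟧[X]) :
    pullbackWeierstrass n y f = f.eval₂ (expand n hn).toRingHom y := by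
  simp [pullbackWeierstrass, Polynomial.eval₂_eq_sum_range, substt_X_pow hn]

/-- Let `C_F ∈ K(n, m)` with `gcd(n, m) = 1` and finite Zariski invariant `λ_F`, given in
coordinates where its Puiseux parametrization is `(t^n, t^m + b t^λ + Σ_{i>λ} b_i t^i)` with
`b ≠ 0` and `λ + n ∉ ⟨n, m⟩`, and let `f ∈ ℂ{x}[y]` be its Weierstrass polynomial.  Then there
are `p, q ∈ ℕ` with `q < n` and `p n + q m = (n - 1)m + λ`, and a unique `c ≠ 0`, such that
`f = y^n - x^m + c x^p y^q + Σ_{i n + j m > p n + q m, j < n} a_{ij} x^i y^j`. -/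
theorem normal_form_one_characteristic_exponent (F : Branch) (lam : ℕ)
    (hgcd : Nat.gcd F.n (F.beta 1) = 1)
    (hlow : ∀ i < F.beta 1, F.a i = 0) (hm : F.a (F.beta 1) = 1)
    (hmid : ∀ i, F.beta 1 < i → i < lam → F.a i = 0) (hb : F.a lam ≠ 0)
    (hnot : ¬ ∃ u v : ℕ, lam + F.n = u * F.n + v * F.beta 1)
    (f : Polynomial (PowerSeries ℂ)) (hW : IsWeierstrass f F.n)
    (hdef : pullbackWeierstrass F.n F.paramY f = 0) :
    ∃ p q : ℕ, q < F.n ∧ p * F.n + q * F.beta 1 = (F.n - 1) * F.beta 1 + lam ∧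
      ∃! c : ℂ, c ≠ 0 ∧
        ∃ R : Polynomial (PowerSeries ℂ),
          R.degree < (F.n : ℕ) ∧
          (∀ i j : ℕ, i * F.n + j * F.beta 1 ≤ p * F.n + q * F.beta 1 →
            PowerSeries.coeff i (R.coeff j) = 0) ∧
          f = Polynomial.X ^ F.n - Polynomial.C (PowerSeries.X ^ F.beta 1) +
              Polynomial.C (PowerSeries.C c * PowerSeries.X ^ p) * Polynomial.X ^ q + R := by
  obtain ⟨hmonic, hdeg, -⟩ := hW
  have hn : F.n ≠ 0 := F.npos.ne'
  have hcoeffY (i : ℕ) : coeff i F.paramY = F.a i := coeff_mk i F.a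
  have hml : F.beta 1 < lam := by
    refine lt_of_le_of_ne (not_lt.1 fun h => hb (hlow lam h)) ?_
    rintro rfl
    exact hnot ⟨1, 1, by ring⟩
  obtain ⟨u, v, hy, hu, hyv, hv⟩ := exists_eval₂_expand_X_pow_sub_C_eq (y := F.paramY) hn hml
    (by simpa [hcoeffY] using hlow) (by simpa [hcoeffY] using hm) (by simpa [hcoeffY] using hmid)
  set g := f - (Polynomial.X ^ F.n - Polynomial.C (X ^ F.beta 1)) with hg_def
  have hg : g.natDegree < F.n := by
    rw [hg_def, sub_sub_eq_add_sub, add_sub_right_comm, Polynomial.natDegree_add_C]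
    exact Polynomial.IsMonicOfDegree.natDegree_sub_X_pow hn ⟨hdeg, hmonic⟩
  have hpull : g.eval₂ (expand F.n hn).toRingHom (X ^ F.beta 1 * u) =
      -(X ^ ((F.n - 1) * F.beta 1 + lam) * v) := by
    rw [← hy, Polynomial.eval₂_sub, ← pullbackWeierstrass_eq_eval₂, hdef, hyv, zero_sub]
  have hglow := coeff_eq_zero_of_weight_lt hn hgcd hu hg fun w hw => by
    rw [hpull, map_neg, coeff_X_pow_mul', if_neg hw.not_ge, neg_zero]
  obtain ⟨p, q, hq, hpq⟩ := Nat.Coprime.exists_mul_add_mul_eq hgcd F.npos (Nat.le_add_right _ lam)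
  refine ⟨p, q, hq, hpq, existsUnique_eq_add_C_mul_X_pow_add hgcd hg
    (hpq ▸ hglow) hq ?_⟩
  rw [← coeff_eval₂_expand_eq_of_weight hn hgcd hu hg hglow hq hpq, hpull, map_neg,
    coeff_X_pow_mul', if_pos le_rfl, Nat.sub_self, coeff_zero_eq_constantCoeff_apply, hv,
    hcoeffY]
  exact neg_ne_zero.2 (mul_ne_zero (Nat.cast_ne_zero.2 hn) hb)
end

section
/- Let C_f ∈ K(β_0, β_1, …, β_g) and C_h ∈ K(β′_0, β′_1, …, β′_{g′}) be plane branches with values semigroups Γ_f = ⟨v_0, …, v_g⟩ and Γ_h = ⟨v′_0, …, v′_{g′}⟩, and set e_i = gcd(β_0, …, β_i), e′_i = gcd(β′_0, …, β′_i). If cont(C_f, C_h) > β_k/β_0 for some k ≤ min(g, g′), then e_i/e′_i = β_i/β′_i = v_i/v′_i for all 0 ≤ i ≤ k. -/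
/-!
Two Newton–Puiseux roots with contact `> β_k/n` have the same coefficients, hence the same
support, at all exponents `≤ β_k/n`. The normalized characteristic data `β_i/n` and `e_i/n`,
`i ≤ k`, only depend on this part of the support: `β_{i+1}/n` is its least element outside the
lattice `(e_i/n)ℕ`, and `e_{i+1}/n = gcd(e_i, β_{i+1})/n`. Hence `β_i/β'_i` and `e_i/e'_i`, and
through the recursion defining the `v_i` also `v_i/v'_i`, are all equal to `n/n'`.
-/

open scoped Classical

open Set

theorem IsLeast.of_inter_Iic_eq {α : Type*} [LinearOrder α] {S T : Set α} {x r : α}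
    (hS : IsLeast S x) (hxr : x ≤ r) (hST : S ∩ Iic r = T ∩ Iic r) : IsLeast T x := by
  refine ⟨(hST ▸ ⟨hS.1, hxr⟩ : x ∈ T ∩ Iic r).1, fun t ht => ?_⟩
  rcases le_or_gt t r with htr | hrt
  · exact hS.2 (hST ▸ ⟨ht, htr⟩ : t ∈ S ∩ Iic r).1
  · exact hxr.trans hrt.le

theorem natCast_div_eq_natCast_div_iff {a b c d : ℕ} (hb : b ≠ 0) (hd : d ≠ 0) :
    (a : ℚ) / b = c / d ↔ a * d = c * b := by
  rw [div_eq_div_iff (by exact_mod_cast hb) (by exact_mod_cast hd)]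
  norm_cast

theorem natCast_div_eq_natCast_div_of_mul_eq_mul {x x' y y' N N' : ℕ} (hx : x ≠ 0) (hy : y ≠ 0)
    (hN' : N' ≠ 0) (hxN : x * N' = x' * N) (hyN : y * N' = y' * N) :
    (x : ℚ) / x' = y / y' := by
  have hx' : x' ≠ 0 := by rintro rfl; simp_all
  have hy' : y' ≠ 0 := by rintro rfl; simp_all
  rw [(natCast_div_eq_natCast_div_iff hx' hN').2 (hxN.trans (mul_comm _ _)),
    (natCast_div_eq_natCast_div_iff hy' hN').2 (hyN.trans (mul_comm _ _))]

theorem Nat.gcd_mul_eq_gcd_mul {a b a' b' N N' : ℕ} (ha : a * N' = a' * N)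
    (hb : b * N' = b' * N) : Nat.gcd a b * N' = Nat.gcd a' b' * N := by
  rw [← Nat.gcd_mul_right, ← Nat.gcd_mul_right, ha, hb]

namespace Branch

theorem e_succ (F : Branch) (m : ℕ) : F.e (m + 1) = Nat.gcd (F.e m) (F.beta (m + 1)) := rfl

theorem v_add_two (F : Branch) (m : ℕ) :
    F.v (m + 2) = F.e m / F.e (m + 1) * F.v (m + 1) + F.beta (m + 2) - F.beta (m + 1) := rfl

theorem e_succ_dvd (F : Branch) (m : ℕ) : F.e (m + 1) ∣ F.e m := Nat.gcd_dvd_left _ _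

theorem e_dvd_n (F : Branch) : ∀ m, F.e m ∣ F.n
  | 0 => dvd_rfl
  | m + 1 => (F.e_succ_dvd m).trans (F.e_dvd_n m)

theorem e_pos (F : Branch) (m : ℕ) : 0 < F.e m := Nat.pos_of_dvd_of_pos (F.e_dvd_n m) F.npos

theorem exists_not_e_dvd_of_lt_genus (F : Branch) {m : ℕ} (h : m < F.genus) :
    ∃ i, F.a i ≠ 0 ∧ ¬ F.e m ∣ i := by
  by_contra! hdvd
  have he : F.e m = 1 := F.primitive _ (F.e_dvd_n m) hdvd
  exact (Nat.sInf_le (show m ∈ {g | F.e g = 1} from he)).not_gt h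

theorem beta_succ_spec (F : Branch) {m : ℕ} (h : m < F.genus) :
    F.a (F.beta (m + 1)) ≠ 0 ∧ ¬ F.e m ∣ F.beta (m + 1) :=
  Nat.sInf_mem (F.exists_not_e_dvd_of_lt_genus h)

theorem n_lt_beta_succ (F : Branch) {m : ℕ} (h : m < F.genus) : F.n < F.beta (m + 1) :=
  lt_of_not_ge fun hle => (F.beta_succ_spec h).1 (F.lowZero _ hle)

theorem beta_le_beta_succ (F : Branch) {m : ℕ} (h : m < F.genus) :
    F.beta m ≤ F.beta (m + 1) := by
  cases m with
  | zero => exact (F.n_lt_beta_succ h).le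
  | succ m =>
    obtain ⟨hne, hndvd⟩ := F.beta_succ_spec h
    exact Nat.sInf_le ⟨hne, fun hdvd => hndvd ((F.e_succ_dvd m).trans hdvd)⟩

theorem beta_le_beta (F : Branch) {i k : ℕ} (hik : i ≤ k) (hk : k ≤ F.genus) :
    F.beta i ≤ F.beta k := by
  induction k, hik using Nat.le_induction with
  | base => exact le_rfl
  | succ k _ ih => exact (ih (by omega)).trans (F.beta_le_beta_succ (by omega))

theorem beta_pos (F : Branch) {m : ℕ} (h : m ≤ F.genus) : 0 < F.beta m :=
  F.npos.trans_le (F.beta_le_beta (Nat.zero_le m) h)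

theorem v_pos (F : Branch) : ∀ m, m ≤ F.genus → 0 < F.v m := by
  refine Nat.twoStepInduction (fun _ => F.npos) (fun h => F.beta_pos h) fun m _ ih hm => ?_
  have hq : 0 < F.e m / F.e (m + 1) :=
    Nat.div_pos (Nat.le_of_dvd (F.e_pos m) (F.e_succ_dvd m)) (F.e_pos _)
  have hqv : 0 < F.e m / F.e (m + 1) * F.v (m + 1) := Nat.mul_pos hq (ih (by omega))
  have hβ : F.beta (m + 1) ≤ F.beta (m + 2) := F.beta_le_beta_succ (by omega)
  rw [v_add_two]
  omega

def puiseuxSupport (F : Branch) : Set ℚ := {q | ∃ i, F.a i ≠ 0 ∧ (i : ℚ) / F.n = q}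

theorem rootCoeff_ne_zero_iff (F : Branch) (j : ℕ) (q : ℚ) :
    F.rootCoeff j q ≠ 0 ↔ q ∈ F.puiseuxSupport := by
  have hn : (F.n : ℚ) ≠ 0 := by exact_mod_cast F.npos.ne'
  unfold rootCoeff
  split_ifs with h
  · have hi := h.choose_spec
    simp only [ne_eq, mul_eq_zero, Complex.exp_ne_zero, or_false]
    constructor
    · intro ha
      exact ⟨_, ha, by rw [hi]; field_simp⟩
    · rintro ⟨i, ha, rfl⟩
      have : h.choose = i := by exact_mod_cast hi.trans (div_mul_cancel₀ _ hn)
      rwa [this]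
  · simp only [ne_eq, not_true_eq_false, false_iff]
    rintro ⟨i, -, rfl⟩
    exact h ⟨i, (div_mul_cancel₀ _ hn).symm⟩

theorem rootCoeff_eq_of_lt_rootDiffOrder {F G : Branch} {j l m : ℕ}
    (h : (((m : ℚ) / (F.n * G.n) : ℚ) : WithTop ℚ) < F.rootDiffOrder G j l) :
    F.rootCoeff j ((m : ℚ) / (F.n * G.n)) = G.rootCoeff l ((m : ℚ) / (F.n * G.n)) := by
  by_contra hne
  have hex : ∃ m : ℕ,
      F.rootCoeff j ((m : ℚ) / (F.n * G.n)) ≠ G.rootCoeff l ((m : ℚ) / (F.n * G.n)) :=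
    ⟨m, hne⟩
  rw [rootDiffOrder, dif_pos hex, WithTop.coe_lt_coe] at h
  exact h.not_ge (by gcongr; exact Nat.cast_le.2 (Nat.find_le hne))

theorem puiseuxSupport_inter_Iic_eq {F G : Branch} {j l : ℕ} {r : ℚ}
    (h : (r : WithTop ℚ) < F.rootDiffOrder G j l) :
    F.puiseuxSupport ∩ Iic r = G.puiseuxSupport ∩ Iic r := by
  have hgrid : ∀ m : ℕ, (m : ℚ) / (F.n * G.n) ≤ r →
      ((m : ℚ) / (F.n * G.n) ∈ F.puiseuxSupport ↔
        (m : ℚ) / (F.n * G.n) ∈ G.puiseuxSupport) :=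
    fun m hm => by
      rw [← rootCoeff_ne_zero_iff F j, ← rootCoeff_ne_zero_iff G l,
        rootCoeff_eq_of_lt_rootDiffOrder ((WithTop.coe_le_coe.2 hm).trans_lt h)]
  have hnF : (F.n : ℚ) ≠ 0 := by exact_mod_cast F.npos.ne'
  have hnG : (G.n : ℚ) ≠ 0 := by exact_mod_cast G.npos.ne'
  ext q
  simp only [mem_inter_iff, mem_Iic, and_congr_left_iff]
  intro hq
  constructor
  · intro hF
    obtain ⟨i, -, rfl⟩ := id hF
    have hgrid_i : (i : ℚ) / F.n = ((i * G.n : ℕ) : ℚ) / (F.n * G.n) := by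
      push_cast; field_simp
    rw [hgrid_i] at hF hq ⊢
    exact (hgrid _ hq).1 hF
  · intro hG
    obtain ⟨i, -, rfl⟩ := id hG
    have hgrid_i : (i : ℚ) / G.n = ((i * F.n : ℕ) : ℚ) / (F.n * G.n) := by
      push_cast; field_simp
    rw [hgrid_i] at hG hq ⊢
    exact (hgrid _ hq).2 hG

theorem exists_lt_rootDiffOrder_of_lt_contact {F G : Branch} {r : WithTop ℚ}
    (h : r < F.contact G) : ∃ j l : ℕ, r < F.rootDiffOrder G j l := by
  obtain ⟨p, -, hp⟩ := (Finset.lt_sup'_iff _).1 h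
  exact ⟨p.1, p.2, hp⟩

def supportOffLattice (F : Branch) (m : ℕ) : Set ℚ :=
  {q ∈ F.puiseuxSupport | ∀ z : ℕ, q ≠ z * (F.e m / F.n)}

theorem natCast_div_mem_supportOffLattice_iff (F : Branch) (m i : ℕ) :
    (i : ℚ) / F.n ∈ F.supportOffLattice m ↔ F.a i ≠ 0 ∧ ¬ F.e m ∣ i := by
  have hn : (F.n : ℚ) ≠ 0 := by exact_mod_cast F.npos.ne'
  have hsupp : (i : ℚ) / F.n ∈ F.puiseuxSupport ↔ F.a i ≠ 0 := by
    refine ⟨fun ⟨i', hi', heq⟩ => ?_, fun hi => ⟨i, hi, rfl⟩⟩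
    rwa [← show i' = i by exact_mod_cast (div_left_inj' hn).1 heq]
  have hlattice : (∀ z : ℕ, (i : ℚ) / F.n ≠ z * (F.e m / F.n)) ↔ ¬ F.e m ∣ i := by
    simp only [ne_eq, ← mul_div_assoc, div_left_inj' hn, Dvd.dvd, not_exists]
    exact forall_congr' fun z => by rw [mul_comm]; exact_mod_cast Iff.rfl
  exact and_congr hsupp hlattice

theorem isLeast_supportOffLattice (F : Branch) (m : ℕ) (hne : (F.supportOffLattice m).Nonempty) :
    IsLeast (F.supportOffLattice m) (F.beta (m + 1) / F.n) := by
  obtain ⟨_, hi⟩ := hne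
  obtain ⟨i, -, rfl⟩ := hi.1
  have hS : {i | F.a i ≠ 0 ∧ ¬ F.e m ∣ i}.Nonempty :=
    ⟨i, (F.natCast_div_mem_supportOffLattice_iff m i).1 hi⟩
  refine ⟨(F.natCast_div_mem_supportOffLattice_iff m _).2 (Nat.sInf_mem hS), ?_⟩
  rintro _ hj
  obtain ⟨j, -, rfl⟩ := hj.1
  have hβj : F.beta (m + 1) ≤ j :=
    Nat.sInf_le ((F.natCast_div_mem_supportOffLattice_iff m j).1 hj)
  gcongr

theorem supportOffLattice_inter_Iic_eq {F H : Branch} {m : ℕ} {r : ℚ}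
    (hsupp : F.puiseuxSupport ∩ Iic r = H.puiseuxSupport ∩ Iic r)
    (he : (F.e m : ℚ) / F.n = H.e m / H.n) :
    F.supportOffLattice m ∩ Iic r = H.supportOffLattice m ∩ Iic r := by
  ext q
  have hq := Set.ext_iff.1 hsupp q
  simp only [supportOffLattice, mem_inter_iff, mem_ofPred_eq, mem_Iic, he] at hq ⊢
  tauto

theorem beta_mul_eq_and_e_mul_eq {F H : Branch} {k : ℕ} (hk : k ≤ F.genus)
    (hsupp :
      F.puiseuxSupport ∩ Iic (F.beta k / F.n) = H.puiseuxSupport ∩ Iic (F.beta k / F.n)) :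
    ∀ m ≤ k, F.beta m * H.n = H.beta m * F.n ∧ F.e m * H.n = H.e m * F.n := by
  intro m hm
  induction m with
  | zero => exact ⟨mul_comm _ _, mul_comm _ _⟩
  | succ m ih =>
    obtain ⟨-, he⟩ := ih (by omega)
    have hF := F.isLeast_supportOffLattice m
      ⟨_, (F.natCast_div_mem_supportOffLattice_iff m _).2 (F.beta_succ_spec (by omega))⟩
    have hβk : (F.beta (m + 1) : ℚ) / F.n ≤ F.beta k / F.n := by
      gcongr
      exact F.beta_le_beta hm hk
    have hH := hF.of_inter_Iic_eq hβk <| supportOffLattice_inter_Iic_eq hsupp <|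
      (natCast_div_eq_natCast_div_iff F.npos.ne' H.npos.ne').2 he
    have hβ := (natCast_div_eq_natCast_div_iff F.npos.ne' H.npos.ne').1 <|
      hH.unique (H.isLeast_supportOffLattice m ⟨_, hH.1⟩)
    exact ⟨hβ, by rw [e_succ, e_succ]; exact Nat.gcd_mul_eq_gcd_mul he hβ⟩

theorem v_mul_eq {F H : Branch} {k : ℕ}
    (hbe : ∀ m ≤ k, F.beta m * H.n = H.beta m * F.n ∧ F.e m * H.n = H.e m * F.n) :
    ∀ m ≤ k, F.v m * H.n = H.v m * F.n := by
  refine Nat.twoStepInduction (fun _ => mul_comm _ _) (fun h => (hbe 1 h).1) fun m _ ih hm => ?_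
  have hq : F.e m / F.e (m + 1) = H.e m / H.e (m + 1) := by
    rw [← Nat.mul_div_mul_right (F.e m) (F.e (m + 1)) H.npos, (hbe m (by omega)).2,
      (hbe (m + 1) (by omega)).2, Nat.mul_div_mul_right _ _ F.npos]
  -- `Nat.sub_mul` holds for truncated subtraction, so no monotonicity of `β` is needed here.
  rw [v_add_two, v_add_two, Nat.sub_mul, Nat.sub_mul, add_mul, add_mul, mul_assoc, mul_assoc,
    ih (by omega), (hbe (m + 1) (by omega)).1, (hbe (m + 2) hm).1, hq]

end Branch

theorem contact_gt_implies_proportional_general (F H : Branch) (k : ℕ)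
    (hkF : k ≤ F.genus)
    (hc : (((F.beta k : ℚ) / (F.beta 0 : ℚ) : ℚ) : WithTop ℚ) < F.contact H) :
    ∀ i ≤ k,
      (F.e i : ℚ) / (H.e i : ℚ) = (F.beta i : ℚ) / (H.beta i : ℚ) ∧
      (F.beta i : ℚ) / (H.beta i : ℚ) = (F.v i : ℚ) / (H.v i : ℚ) := by
  obtain ⟨j, l, hjl⟩ := Branch.exists_lt_rootDiffOrder_of_lt_contact hc
  have hbe := Branch.beta_mul_eq_and_e_mul_eq hkF (Branch.puiseuxSupport_inter_Iic_eq hjl)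
  intro i hi
  obtain ⟨hβ, he⟩ := hbe i hi
  have hβ0 := (F.beta_pos (hi.trans hkF)).ne'
  exact ⟨natCast_div_eq_natCast_div_of_mul_eq_mul (F.e_pos i).ne' hβ0 H.npos.ne' he hβ,
    natCast_div_eq_natCast_div_of_mul_eq_mul hβ0 (F.v_pos i (hi.trans hkF)).ne' H.npos.ne' hβ
      (Branch.v_mul_eq hbe i hi)⟩

/-- If `cont(C_F, C_H) > β_k/β₀` for some `k ≤ min(g, g')`, then
`e_i/e'_i = β_i/β'_i = v_i/v'_i` for all `0 ≤ i ≤ k`. -/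
theorem contact_gt_implies_proportional (F H : Branch) (k : ℕ)
    (hkF : k ≤ F.genus) (hkH : k ≤ H.genus)
    (hc : (((F.beta k : ℚ) / (F.beta 0 : ℚ) : ℚ) : WithTop ℚ) < F.contact H) :
    ∀ i ≤ k,
      (F.e i : ℚ) / (H.e i : ℚ) = (F.beta i : ℚ) / (H.beta i : ℚ) ∧
      (F.beta i : ℚ) / (H.beta i : ℚ) = (F.v i : ℚ) / (H.v i : ℚ) :=
  contact_gt_implies_proportional_general F H k hkF hc
end
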